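/- arXiv:2602.12539 — 3 statements merged into one kernel-verified Lean document; each statement's English description precedes it below -/
import Mathlib

section
/- Let T be a linear map on d×d matrices satisfying s-detailed balance with respect to a full-rank state ρ. Then the map F_s^{−1/2} ∘ T ∘ F_s^{1/2} is self-adjoint with respect to the Hilbert–Schmidt inner product; consequently T is diagonalizable with a real spectrum. -/
open Matrix
open scoped ComplexOrder

/-!
With `G := F_s^{1/2}`, which is Hilbert–Schmidt self-adjoint, detailed balance reads
`T ∘ G² = G² ∘ T†`, i.e. `G T† G⁻¹ = G⁻¹ T G`; and `G T† G⁻¹` is the adjoint of `G⁻¹ T G`.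
A self-adjoint `G⁻¹ T G` has an orthonormal eigenbasis with real eigenvalues, whose image
under `G` is an eigenbasis of `T`.
-/

/-- Real matrix power of a Hermitian matrix, via the functional calculus. -/
noncomputable def mpow {n : Type*} [Fintype n] [DecidableEq n]
    (ρ : Matrix n n ℂ) (hρ : ρ.IsHermitian) (r : ℝ) : Matrix n n ℂ :=
  hρ.cfc (fun x => x ^ r)

noncomputable abbrev Matrix.hilbertSchmidtNormedAddCommGroup {n : Type*} [Fintype n]
    [DecidableEq n] : NormedAddCommGroup (Matrix n n ℂ) :=
  toMatrixNormedAddCommGroup 1 PosDef.one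

attribute [local instance] Matrix.hilbertSchmidtNormedAddCommGroup

noncomputable abbrev Matrix.hilbertSchmidtInnerProductSpace {n : Type*} [Fintype n]
    [DecidableEq n] : InnerProductSpace ℂ (Matrix n n ℂ) :=
  toMatrixInnerProductSpace 1 PosSemidef.one

attribute [local instance] Matrix.hilbertSchmidtInnerProductSpace

section DetailedBalance

variable {𝕜 E : Type*} [RCLike 𝕜] [NormedAddCommGroup E] [InnerProductSpace 𝕜 E]

theorem LinearEquiv.isSymmetric_symm_comp_comp_of_detailedBalance {G : E ≃ₗ[𝕜] E}
    (hG : (G : E →ₗ[𝕜] E).IsSymmetric) {T Tdual : E →ₗ[𝕜] E}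
    (hadj : ∀ x y, inner 𝕜 x (Tdual y) = inner 𝕜 (T x) y)
    (hDB : ∀ x, T (G (G x)) = G (G (Tdual x))) :
    (G.symm.toLinearMap ∘ₗ T ∘ₗ G.toLinearMap).IsSymmetric := by
  have hconj : ∀ y, G.symm (T (G y)) = G (Tdual (G.symm y)) := fun y => by
    simpa using congrArg G.symm (hDB (G.symm y))
  intro x y
  calc inner 𝕜 (G.symm (T (G x))) y = inner 𝕜 (T (G x)) (G.symm y) := hG.toLinearMap_symm _ _
    _ = inner 𝕜 (G x) (Tdual (G.symm y)) := (hadj _ _).symm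
    _ = inner 𝕜 x (G.symm (T (G y))) := by rw [hconj]; exact hG x _

theorem LinearEquiv.exists_basis_eigen_of_isSymmetric_symm_comp_comp [FiniteDimensional 𝕜 E]
    {N : ℕ} (hN : Module.finrank 𝕜 E = N) (G : E ≃ₗ[𝕜] E) {T : E →ₗ[𝕜] E}
    (hS : (G.symm.toLinearMap ∘ₗ T ∘ₗ G.toLinearMap).IsSymmetric) :
    ∃ (b : Module.Basis (Fin N) 𝕜 E) (μ : Fin N → ℝ), ∀ i, T (b i) = (μ i : 𝕜) • b i := by
  refine ⟨(hS.eigenvectorBasis hN).toBasis.map G, hS.eigenvalues hN, fun i => ?_⟩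
  have hv : G.symm (T (G _)) = _ := hS.apply_eigenvectorBasis hN i
  rw [Module.Basis.map_apply, OrthonormalBasis.coe_toBasis, ← G.apply_symm_apply (T _), hv,
    map_smul]

end DetailedBalance

section Sandwich

variable {n : Type*} [Fintype n] [DecidableEq n]

theorem Matrix.inner_hilbertSchmidt (A B : Matrix n n ℂ) : inner ℂ A B = (Aᴴ * B).trace := by
  change (B * 1 * Aᴴ).trace = _
  rw [mul_one, trace_mul_comm]

theorem Matrix.inner_hilbertSchmidt_mul_mul {L R : Matrix n n ℂ} (hL : L.IsHermitian)
    (hR : R.IsHermitian) (A B : Matrix n n ℂ) :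
    inner ℂ (L * A * R) B = inner ℂ A (L * B * R) := by
  simp only [inner_hilbertSchmidt, conjTranspose_mul, hL.eq, hR.eq, mul_assoc]
  rw [trace_mul_comm]
  simp only [mul_assoc]

variable {ρ : Matrix n n ℂ}

theorem mpow_eq_cfc (hρ : ρ.IsHermitian) (r : ℝ) : mpow ρ hρ r = cfc (fun x : ℝ => x ^ r) ρ :=
  (hρ.cfc_eq _).symm

theorem isHermitian_mpow (hρ : ρ.IsHermitian) (r : ℝ) : (mpow ρ hρ r).IsHermitian := by
  rw [mpow_eq_cfc]
  exact cfc_predicate _ _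

theorem mpow_zero (hρ : ρ.IsHermitian) : mpow ρ hρ 0 = 1 := by
  simp only [mpow_eq_cfc, Real.rpow_zero]
  exact cfc_const_one ℝ ρ

theorem mpow_mul_mpow (hρ : ρ.PosDef) (r r' : ℝ) :
    mpow ρ hρ.1 r * mpow ρ hρ.1 r' = mpow ρ hρ.1 (r + r') := by
  simp only [mpow_eq_cfc]
  rw [← cfc_mul _ _ ρ (ρ.finite_real_spectrum.continuousOn _)
    (ρ.finite_real_spectrum.continuousOn _)]
  refine cfc_congr fun x hx => ?_
  obtain ⟨i, rfl⟩ := hρ.1.spectrum_real_eq_range_eigenvalues ▸ hx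
  exact (Real.rpow_add (hρ.eigenvalues_pos i) r r').symm

theorem mpow_mul_mul_mpow (hρ : ρ.PosDef) (a a' b b' : ℝ) (A : Matrix n n ℂ) :
    mpow ρ hρ.1 a * (mpow ρ hρ.1 a' * A * mpow ρ hρ.1 b') * mpow ρ hρ.1 b
      = mpow ρ hρ.1 (a + a') * A * mpow ρ hρ.1 (b' + b) := by
  rw [← mpow_mul_mpow hρ, ← mpow_mul_mpow hρ]
  simp only [mul_assoc]

/-- `F_s^t` is `mpowSandwich hρ (t * (1 - s)) (t * s)`. -/
noncomputable def mpowSandwich (hρ : ρ.PosDef) (a b : ℝ) : Matrix n n ℂ ≃ₗ[ℂ] Matrix n n ℂ where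
  toFun A := mpow ρ hρ.1 a * A * mpow ρ hρ.1 b
  invFun A := mpow ρ hρ.1 (-a) * A * mpow ρ hρ.1 (-b)
  map_add' A B := by simp only [mul_add, add_mul]
  map_smul' c A := by simp only [Matrix.mul_smul, Matrix.smul_mul, RingHom.id_apply]
  left_inv A := by
    dsimp only
    rw [mpow_mul_mul_mpow hρ, neg_add_cancel, add_neg_cancel, mpow_zero, one_mul, mul_one]
  right_inv A := by
    dsimp only
    rw [mpow_mul_mul_mpow hρ, add_neg_cancel, neg_add_cancel, mpow_zero, one_mul, mul_one]

theorem mpowSandwich_apply_apply (hρ : ρ.PosDef) (a b : ℝ) (A : Matrix n n ℂ) :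
    mpowSandwich hρ a b (mpowSandwich hρ a b A)
      = mpow ρ hρ.1 (a + a) * A * mpow ρ hρ.1 (b + b) :=
  mpow_mul_mul_mpow hρ a a b b A

theorem isSymmetric_mpowSandwich (hρ : ρ.PosDef) (a b : ℝ) :
    ((mpowSandwich hρ a b : Matrix n n ℂ ≃ₗ[ℂ] Matrix n n ℂ) :
      Matrix n n ℂ →ₗ[ℂ] Matrix n n ℂ).IsSymmetric :=
  inner_hilbertSchmidt_mul_mul (isHermitian_mpow hρ.1 a) (isHermitian_mpow hρ.1 b)

end Sandwich

theorem detailed_balance_selfAdjoint_diagonalizable_general {n : Type*} [Fintype n] [DecidableEq n]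
    (ρ : Matrix n n ℂ) (hρ : ρ.PosDef)
    (s : ℝ)
    (T Tdual : Matrix n n ℂ →ₗ[ℂ] Matrix n n ℂ)
    (hadj : ∀ A B : Matrix n n ℂ, (Aᴴ * Tdual B).trace = ((T A)ᴴ * B).trace)
    (hDB : ∀ A : Matrix n n ℂ,
      T (mpow ρ hρ.1 (1 - s) * A * mpow ρ hρ.1 s)
        = mpow ρ hρ.1 (1 - s) * Tdual A * mpow ρ hρ.1 s)
    (S : Matrix n n ℂ → Matrix n n ℂ)
    (hS : ∀ A : Matrix n n ℂ,
      S A = mpow ρ hρ.1 (-((1 - s) / 2)) *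
              T (mpow ρ hρ.1 ((1 - s) / 2) * A * mpow ρ hρ.1 (s / 2)) *
            mpow ρ hρ.1 (-(s / 2))) :
    (∀ A B : Matrix n n ℂ, ((S A)ᴴ * B).trace = (Aᴴ * S B).trace)
    ∧ ∃ (b : Module.Basis (Fin (Fintype.card n * Fintype.card n)) ℂ (Matrix n n ℂ))
        (μ : Fin (Fintype.card n * Fintype.card n) → ℝ),
        ∀ i, T (b i) = (μ i : ℂ) • b i := by
  set G := mpowSandwich hρ ((1 - s) / 2) (s / 2)
  have hSG : ⇑(G.symm.toLinearMap ∘ₗ T ∘ₗ G.toLinearMap) = S := funext fun A => (hS A).symm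
  have hDBG : ∀ A, T (G (G A)) = G (G (Tdual A)) := fun A => by
    simp only [G, mpowSandwich_apply_apply, add_halves]
    exact hDB A
  have hsym := G.isSymmetric_symm_comp_comp_of_detailedBalance (isSymmetric_mpowSandwich hρ _ _)
    (fun A B => by simpa only [inner_hilbertSchmidt] using hadj A B) hDBG
  refine ⟨fun A B => ?_, G.exists_basis_eigen_of_isSymmetric_symm_comp_comp ?_ hsym⟩
  · simpa only [← inner_hilbertSchmidt, hSG] using hsym A B
  · rw [Module.finrank_matrix, Module.finrank_self, mul_one]

/-- If `T` satisfies `s`-detailed balance w.r.t. a full-rank state `ρ`, then the conjugated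
map `F_s^{-1/2} ∘ T ∘ F_s^{1/2}` is self-adjoint for the Hilbert–Schmidt inner product, and
consequently `T` is diagonalizable with real spectrum. -/
theorem detailed_balance_selfAdjoint_diagonalizable {n : Type*} [Fintype n] [DecidableEq n]
    (ρ : Matrix n n ℂ) (hρ : ρ.PosDef) (htr : ρ.trace = 1)
    (s : ℝ) (hs : s ∈ Set.Icc (0 : ℝ) 1)
    (T Tdual : Matrix n n ℂ →ₗ[ℂ] Matrix n n ℂ)
    (hadj : ∀ A B : Matrix n n ℂ, (Aᴴ * Tdual B).trace = ((T A)ᴴ * B).trace)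
    (hDB : ∀ A : Matrix n n ℂ,
      T (mpow ρ hρ.1 (1 - s) * A * mpow ρ hρ.1 s)
        = mpow ρ hρ.1 (1 - s) * Tdual A * mpow ρ hρ.1 s)
    (S : Matrix n n ℂ → Matrix n n ℂ)
    (hS : ∀ A : Matrix n n ℂ,
      S A = mpow ρ hρ.1 (-((1 - s) / 2)) *
              T (mpow ρ hρ.1 ((1 - s) / 2) * A * mpow ρ hρ.1 (s / 2)) *
            mpow ρ hρ.1 (-(s / 2))) :
    (∀ A B : Matrix n n ℂ, ((S A)ᴴ * B).trace = (Aᴴ * S B).trace)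
    ∧ ∃ (b : Module.Basis (Fin (Fintype.card n * Fintype.card n)) ℂ (Matrix n n ℂ))
        (μ : Fin (Fintype.card n * Fintype.card n) → ℝ),
        ∀ i, T (b i) = (μ i : ℂ) • b i :=
  detailed_balance_selfAdjoint_diagonalizable_general ρ hρ s T Tdual hadj hDB S hS
end

section
/- Let N be a quantum channel satisfying KMS (s=1/2) detailed balance with respect to a full-rank Gibbs state ρ, having ρ as its unique fixed state and spectrum in [0,1] with spectral gap Δ. Then the mixing time satisfies the lower bound (1/Δ − 1)·log(1/ε) ≤ t_mix(ε), where t_mix(ε) is the least t such that ‖N^t(σ) − ρ‖₁ ≤ ε for all states σ. -/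
open Matrix
open scoped ComplexOrder

/-- The trace (Schatten 1) norm of a complex square matrix. -/
noncomputable def traceNorm {n : Type*} [Fintype n] [DecidableEq n] (A : Matrix n n ℂ) : ℝ :=
  (((Matrix.posSemidef_conjTranspose_mul_self A).1.eigenvectorUnitary.1 *
      diagonal (((↑) : ℝ → ℂ) ∘ (√·) ∘ (Matrix.posSemidef_conjTranspose_mul_self A).1.eigenvalues) *
      (star (Matrix.posSemidef_conjTranspose_mul_self A).1.eigenvectorUnitary : Matrix n n ℂ)).trace).re

/-- The weighted sesquilinear form `⟨A,B⟩_s = tr(Aᴴ ρ^{1-s} B ρ^s)`. -/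
noncomputable def wInner {n : Type*} [Fintype n] [DecidableEq n]
    (ρ : Matrix n n ℂ) (hρ : ρ.IsHermitian) (s : ℝ) (A B : Matrix n n ℂ) : ℂ :=
  (Aᴴ * mpow ρ hρ (1 - s) * B * mpow ρ hρ s).trace

/-!
Let `W` be a Hermitian eigenvector of the dual channel with eigenvalue `1 - Δ` (the Hermitian or
anti-Hermitian part of the given eigenvector). Since `ρ` is fixed, `tr(W ρ) = (1 - Δ) tr(W ρ)`,
so `tr(W ρ) = 0` and `tr(W (N^t σ - ρ)) = (1 - Δ)^t tr(W σ)`. Taking for `σ` the eigenprojection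
of `W` for an eigenvalue `λ` of maximal modulus, Hölder's inequality
`|tr(W A)| ≤ |λ| ‖A‖₁` turns `ε`-mixing at time `t` into `(1 - Δ)^t ≤ ε`, and the bound follows
from `log (1 / (1 - Δ)) ≤ Δ / (1 - Δ)`.
-/

lemma Complex.norm_le_of_neg_le_of_le {z : ℂ} {c : ℝ} (h₁ : -(c : ℂ) ≤ z) (h₂ : z ≤ c) :
    ‖z‖ ≤ c := by
  obtain ⟨hre₁, him⟩ := Complex.le_def.mp h₁
  obtain ⟨hre₂, -⟩ := Complex.le_def.mp h₂
  simp only [Complex.neg_re, Complex.ofReal_re, Complex.neg_im, Complex.ofReal_im, neg_zero]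
    at hre₁ hre₂ him
  rw [← Complex.re_add_im z, ← him, Complex.ofReal_zero, zero_mul, add_zero, Complex.norm_real,
    Real.norm_eq_abs]
  exact abs_le.mpr ⟨hre₁, hre₂⟩

lemma Real.one_div_sub_one_mul_log_one_div_le {Δ ε : ℝ} {t : ℕ} (hΔ₀ : 0 < Δ) (hΔ₁ : Δ ≤ 1)
    (hε : 0 < ε) (h : (1 - Δ) ^ t ≤ ε) : (1 / Δ - 1) * Real.log (1 / ε) ≤ t := by
  obtain rfl | hΔ₁ := hΔ₁.eq_or_lt
  · simp
  have hq : 0 < 1 - Δ := sub_pos.mpr hΔ₁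
  have hlog_ε : Real.log (1 / ε) ≤ t * Real.log (1 / (1 - Δ)) := by
    rw [← Real.log_pow, _root_.one_div_pow]
    exact Real.log_le_log (by positivity) (one_div_le_one_div_of_le (by positivity) h)
  have hlog_q : Real.log (1 / (1 - Δ)) ≤ Δ / (1 - Δ) := by
    have := Real.log_le_sub_one_of_pos (one_div_pos.mpr hq)
    rwa [show 1 / (1 - Δ) - 1 = Δ / (1 - Δ) by field_simp; ring] at this
  calc (1 / Δ - 1) * Real.log (1 / ε)
      ≤ ((1 - Δ) / Δ) * (t * (Δ / (1 - Δ))) := by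
        rw [show 1 / Δ - 1 = (1 - Δ) / Δ by field_simp]
        gcongr
        exact hlog_ε.trans (by gcongr)
    _ = t := by field_simp

namespace Matrix

lemma trace_mul_vecMulVec_star {n : Type*} [Fintype n] (W : Matrix n n ℂ) (x : n → ℂ) :
    (W * vecMulVec x (star x)).trace = star x ⬝ᵥ W *ᵥ x := by
  rw [trace_mul_comm, vecMulVec_mul, trace_vecMulVec, dotProduct_comm, dotProduct_mulVec]

section Hermitian

open scoped MatrixOrder

variable {n : Type*} [Fintype n] [DecidableEq n]

lemma IsHermitian.trace_cfc {A : Matrix n n ℂ} (hA : A.IsHermitian) (f : ℝ → ℝ) :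
    (hA.cfc f).trace = ∑ i, (f (hA.eigenvalues i) : ℂ) := by
  rw [IsHermitian.cfc, Unitary.conjStarAlgAut_apply, trace_mul_cycle, Unitary.coe_star_mul_self,
    one_mul, trace_diagonal]
  rfl

lemma traceNorm_eq_sum_abs_eigenvalues {A : Matrix n n ℂ} (hA : A.IsHermitian) :
    traceNorm A = ∑ i, |hA.eigenvalues i| := by
  have hB := posSemidef_conjTranspose_mul_self A
  have habs : hB.1.cfc Real.sqrt = hA.cfc (‖·‖) := by
    rw [← hB.1.cfc_eq, ← cfcₙ_eq_cfc, ← CFC.sqrt_eq_real_sqrt _ hB.nonneg, ← hA.cfc_eq,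
      ← CFC.abs_eq_cfc_norm A hA.isSelfAdjoint]
    rfl
  change (hB.1.cfc Real.sqrt).trace.re = _
  rw [habs, hA.trace_cfc]
  simp [← Complex.ofReal_sum]

lemma IsHermitian.star_dotProduct_eigenvectorBasis_self {A : Matrix n n ℂ} (hA : A.IsHermitian)
    (j : n) : star ⇑(hA.eigenvectorBasis j) ⬝ᵥ ⇑(hA.eigenvectorBasis j) = 1 := by
  rw [dotProduct_comm, ← EuclideanSpace.inner_eq_star_dotProduct, inner_self_eq_norm_sq_to_K,
    hA.eigenvectorBasis.orthonormal.1 j]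
  simp

lemma IsHermitian.eq_sum_vecMulVec {A : Matrix n n ℂ} (hA : A.IsHermitian) :
    A = ∑ j, (hA.eigenvalues j : ℂ) •
      vecMulVec ⇑(hA.eigenvectorBasis j) (star ⇑(hA.eigenvectorBasis j)) := by
  conv_lhs => rw [hA.spectral_theorem]
  ext i k
  simp only [Complex.coe_algebraMap, Unitary.conjStarAlgAut_apply, mul_apply,
    eigenvectorUnitary_apply, diagonal_apply, Function.comp_apply, mul_ite, mul_zero,
    Finset.sum_ite_eq', Finset.mem_univ, ↓reduceIte, star_apply, RCLike.star_def,
    Complex.coe_smul, sum_apply, smul_apply, vecMulVec_apply, Pi.star_apply, Complex.real_smul]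
  exact Finset.sum_congr rfl fun j _ => by ring

lemma IsHermitian.norm_star_dotProduct_mulVec_le {W : Matrix n n ℂ} (hW : W.IsHermitian) {c : ℝ}
    (hc : ∀ i, |hW.eigenvalues i| ≤ c) {x : n → ℂ} (hx : star x ⬝ᵥ x = 1) :
    ‖star x ⬝ᵥ W *ᵥ x‖ ≤ c := by
  have hspec : ∀ μ ∈ spectrum ℝ W, |μ| ≤ c := by
    rw [hW.spectrum_real_eq_range_eigenvalues]
    rintro - ⟨i, rfl⟩
    exact hc i
  have hscalar : ∀ a : ℝ, star x ⬝ᵥ algebraMap ℝ (Matrix n n ℂ) a *ᵥ x = a := fun a => by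
    rw [Algebra.algebraMap_eq_smul_one, smul_mulVec, one_mulVec, dotProduct_smul, hx,
      Complex.real_smul, mul_one]
  have hle : W ≤ algebraMap ℝ _ c :=
    le_algebraMap_of_spectrum_le (ha := hW.isSelfAdjoint) fun μ hμ => (abs_le.mp (hspec μ hμ)).2
  have hge : algebraMap ℝ _ (-c) ≤ W :=
    algebraMap_le_of_le_spectrum (ha := hW.isSelfAdjoint) fun μ hμ => (abs_le.mp (hspec μ hμ)).1
  have h₁ := (le_iff.mp hle).dotProduct_mulVec_nonneg x
  have h₂ := (le_iff.mp hge).dotProduct_mulVec_nonneg x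
  rw [sub_mulVec, dotProduct_sub, hscalar, sub_nonneg] at h₁ h₂
  exact Complex.norm_le_of_neg_le_of_le (by simpa using h₂) h₁

lemma IsHermitian.norm_trace_mul_le {W A : Matrix n n ℂ} (hW : W.IsHermitian) (hA : A.IsHermitian)
    {c : ℝ} (hc : ∀ i, |hW.eigenvalues i| ≤ c) : ‖(W * A).trace‖ ≤ c * traceNorm A := by
  conv_lhs => rw [hA.eq_sum_vecMulVec]
  simp only [Matrix.mul_sum, trace_sum, Matrix.mul_smul, trace_smul, trace_mul_vecMulVec_star]
  rw [traceNorm_eq_sum_abs_eigenvalues hA, Finset.mul_sum]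
  refine (norm_sum_le _ _).trans (Finset.sum_le_sum fun j _ => ?_)
  rw [smul_eq_mul, norm_mul, Complex.norm_real, Real.norm_eq_abs, mul_comm c]
  exact mul_le_mul_of_nonneg_left
    (hW.norm_star_dotProduct_mulVec_le hc (hA.star_dotProduct_eigenvectorBasis_self j))
    (abs_nonneg _)

lemma IsHermitian.exists_abs_eigenvalue_max {W : Matrix n n ℂ} (hW : W.IsHermitian) (hW₀ : W ≠ 0) :
    ∃ j, 0 < |hW.eigenvalues j| ∧ ∀ i, |hW.eigenvalues i| ≤ |hW.eigenvalues j| := by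
  have : Nonempty n := by
    by_contra h
    exact hW₀ (Matrix.ext fun i => (not_nonempty_iff.mp h).elim i)
  obtain ⟨j, hj⟩ := Finite.exists_max fun i => |hW.eigenvalues i|
  refine ⟨j, lt_of_le_of_ne (abs_nonneg _) fun h₀ => hW₀ ?_, hj⟩
  rw [← hW.eigenvalues_eq_zero_iff]
  funext i
  exact abs_nonpos_iff.mp ((hj i).trans h₀.ge)

lemma IsHermitian.exists_posSemidef_trace_mul_eq_eigenvalue {W : Matrix n n ℂ}
    (hW : W.IsHermitian) (j : n) :
    ∃ σ : Matrix n n ℂ, σ.PosSemidef ∧ σ.trace = 1 ∧ (W * σ).trace = hW.eigenvalues j := by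
  set v := ⇑(hW.eigenvectorBasis j)
  have hv : star v ⬝ᵥ v = 1 := hW.star_dotProduct_eigenvectorBasis_self j
  refine ⟨vecMulVec v (star v), posSemidef_vecMulVec_self_star v, ?_, ?_⟩
  · rw [trace_vecMulVec, dotProduct_comm, hv]
  · rw [trace_mul_vecMulVec_star, hW.mulVec_eigenvectorBasis j, dotProduct_smul, hv,
      Complex.real_smul, mul_one]

end Hermitian

section Kraus

variable {n ι : Type*} [Fintype n] [Fintype ι]

def krausMap (K : ι → Matrix n n ℂ) : Matrix n n ℂ →ₗ[ℂ] Matrix n n ℂ where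
  toFun X := ∑ u, K u * X * (K u)ᴴ
  map_add' X Y := by simp only [mul_add, add_mul, Finset.sum_add_distrib]
  map_smul' a X := by
    simp only [Matrix.mul_smul, Matrix.smul_mul, Finset.smul_sum, RingHom.id_apply]

variable (K : ι → Matrix n n ℂ)

@[simp]
lemma krausMap_apply (X : Matrix n n ℂ) : krausMap K X = ∑ u, K u * X * (K u)ᴴ := rfl

lemma krausMap_conjTranspose (X : Matrix n n ℂ) : krausMap K Xᴴ = (krausMap K X)ᴴ := by
  simp [conjTranspose_sum, mul_assoc]

lemma IsHermitian.krausMap {X : Matrix n n ℂ} (hX : X.IsHermitian) :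
    (Matrix.krausMap K X).IsHermitian := by
  rw [IsHermitian, ← krausMap_conjTranspose, hX.eq]

lemma IsHermitian.iterate_krausMap {X : Matrix n n ℂ} (hX : X.IsHermitian) (t : ℕ) :
    ((Matrix.krausMap K)^[t] X).IsHermitian :=
  Function.Iterate.rec IsHermitian hX (fun _ hY => hY.krausMap K) t

lemma trace_krausMap_conjTranspose_mul (X Y : Matrix n n ℂ) :
    (krausMap (fun u => (K u)ᴴ) X * Y).trace = (X * krausMap K Y).trace := by
  simp only [krausMap_apply, conjTranspose_conjTranspose, Finset.sum_mul, Finset.mul_sum,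
    trace_sum]
  refine Finset.sum_congr rfl fun u _ => ?_
  simp only [Matrix.mul_assoc]
  rw [trace_mul_comm]
  simp only [Matrix.mul_assoc]

lemma trace_mul_iterate_krausMap {W : Matrix n n ℂ} {μ : ℂ}
    (hW : krausMap (fun u => (K u)ᴴ) W = μ • W) (X : Matrix n n ℂ) (t : ℕ) :
    (W * (krausMap K)^[t] X).trace = μ ^ t * (W * X).trace := by
  induction t with
  | zero => simp
  | succ t ih =>
    rw [Function.iterate_succ_apply', ← trace_krausMap_conjTranspose_mul, hW, smul_mul,
      trace_smul, ih, smul_eq_mul]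
    ring

end Kraus

lemma exists_isHermitian_eigenvector {n : Type*} (Φ : Matrix n n ℂ →ₗ[ℂ] Matrix n n ℂ)
    (hΦ : ∀ X, Φ Xᴴ = (Φ X)ᴴ) {r : ℝ} {Z : Matrix n n ℂ} (hZ : Z ≠ 0) (hΦZ : Φ Z = (r : ℂ) • Z) :
    ∃ W : Matrix n n ℂ, W.IsHermitian ∧ W ≠ 0 ∧ Φ W = (r : ℂ) • W := by
  have hΦZH : Φ Zᴴ = (r : ℂ) • Zᴴ := by
    rw [hΦ, hΦZ, conjTranspose_smul, Complex.star_def, Complex.conj_ofReal]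
  by_cases hre : Z + Zᴴ = 0
  · refine ⟨Complex.I • (Z - Zᴴ), ?_, ?_, ?_⟩
    · rw [IsHermitian, conjTranspose_smul, conjTranspose_sub, conjTranspose_conjTranspose,
        Complex.star_def, Complex.conj_I]
      module
    · have : Z - Zᴴ = (2 : ℂ) • Z := by linear_combination (norm := module) -hre
      simpa [this, Complex.I_ne_zero] using hZ
    · rw [map_smul, map_sub, hΦZ, hΦZH]
      module
  · refine ⟨Z + Zᴴ, ?_, hre, by rw [map_add, hΦZ, hΦZH, smul_add]⟩
    rw [IsHermitian, conjTranspose_add, conjTranspose_conjTranspose, add_comm]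

lemma abs_pow_le_of_traceNorm_iterate_krausMap_sub_le {n ι : Type*} [Fintype n] [DecidableEq n]
    [Fintype ι] {K : ι → Matrix n n ℂ} {ρ : Matrix n n ℂ} (hρ : ρ.IsHermitian)
    (hfix : krausMap K ρ = ρ) {r : ℝ} (hr : r ≠ 1) {W : Matrix n n ℂ} (hW : W.IsHermitian)
    (hW₀ : W ≠ 0) (hWr : krausMap (fun u => (K u)ᴴ) W = (r : ℂ) • W) {t : ℕ} {ε : ℝ}
    (ht : ∀ σ : Matrix n n ℂ, σ.PosSemidef → σ.trace = 1 →
      traceNorm ((krausMap K)^[t] σ - ρ) ≤ ε) :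
    |r| ^ t ≤ ε := by
  obtain ⟨j, hj₀, hj⟩ := hW.exists_abs_eigenvalue_max hW₀
  obtain ⟨σ, hσ, hσ₁, hWσ⟩ := hW.exists_posSemidef_trace_mul_eq_eigenvalue j
  have hWρ : (W * ρ).trace = 0 := by
    have h := trace_mul_iterate_krausMap K hWr ρ 1
    rw [Function.iterate_one, hfix, pow_one] at h
    have : ((r : ℂ) - 1) * (W * ρ).trace = 0 := by linear_combination -h
    exact (mul_eq_zero.mp this).resolve_left (sub_ne_zero.mpr (by exact_mod_cast hr))
  have hHolder := hW.norm_trace_mul_le ((hσ.1.iterate_krausMap K t).sub hρ) hj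
  rw [Matrix.mul_sub, trace_sub, trace_mul_iterate_krausMap K hWr, hWσ, hWρ, sub_zero, norm_mul,
    norm_pow, Complex.norm_real, Complex.norm_real, Real.norm_eq_abs, Real.norm_eq_abs] at hHolder
  refine le_of_mul_le_mul_right ?_ hj₀
  calc |r| ^ t * |hW.eigenvalues j| ≤ |hW.eigenvalues j| * traceNorm ((krausMap K)^[t] σ - ρ) :=
        hHolder
    _ ≤ |hW.eigenvalues j| * ε := by gcongr; exact ht σ hσ hσ₁
    _ = ε * |hW.eigenvalues j| := mul_comm _ _

end Matrix

theorem mixing_time_lower_bound_general {n ι : Type*} [Fintype n] [DecidableEq n] [Fintype ι]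
    (ρ : Matrix n n ℂ) (hρ : ρ.PosDef)
    (N Ndual : Matrix n n ℂ → Matrix n n ℂ)
    (K : ι → Matrix n n ℂ)
    (hKraus : ∀ X : Matrix n n ℂ, N X = ∑ u, K u * X * (K u)ᴴ)
    (hdual : ∀ X : Matrix n n ℂ, Ndual X = ∑ u, (K u)ᴴ * X * K u)
    (hfix : N ρ = ρ)
    (Δ : ℝ) (hΔ0 : 0 < Δ) (hΔ1 : Δ ≤ 1)
    (hgap : ∃ Z : Matrix n n ℂ, Z ≠ 0 ∧ Ndual Z = (((1 : ℝ) - Δ : ℝ) : ℂ) • Z) :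
    ∀ ε : ℝ, 0 < ε → ε < 1 → ∀ t : ℕ,
      (∀ σ : Matrix n n ℂ, σ.PosSemidef → σ.trace = 1 →
        traceNorm (N^[t] σ - ρ) ≤ ε) →
      (1 / Δ - 1) * Real.log (1 / ε) ≤ (t : ℝ) := by
  intro ε hε _ t ht
  obtain rfl : N = krausMap K := funext hKraus
  obtain rfl : Ndual = krausMap (fun u => (K u)ᴴ) := funext fun X => by simp [hdual]
  obtain ⟨Z, hZ₀, hZ⟩ := hgap
  obtain ⟨W, hW, hW₀, hWr⟩ := exists_isHermitian_eigenvector _ (krausMap_conjTranspose _) hZ₀ hZ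
  have hpow := abs_pow_le_of_traceNorm_iterate_krausMap_sub_le hρ.1 hfix
    (by linarith : 1 - Δ ≠ 1) hW hW₀ hWr ht
  rw [abs_of_nonneg (sub_nonneg.mpr hΔ1)] at hpow
  exact Real.one_div_sub_one_mul_log_one_div_le hΔ0 hΔ1 hε hpow

/-- Mixing-time lower bound: for a KMS detailed-balanced quantum channel with unique fixed
state `ρ`, spectrum in `[0,1]` and spectral gap `Δ` (so `1 - Δ` is an eigenvalue of the
dual), any time `t` at which every state is `ε`-mixed satisfies
`(1/Δ − 1)·log(1/ε) ≤ t`. -/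
theorem mixing_time_lower_bound {n ι : Type*} [Fintype n] [DecidableEq n] [Fintype ι]
    (ρ : Matrix n n ℂ) (hρ : ρ.PosDef) (htr : ρ.trace = 1)
    (N Ndual : Matrix n n ℂ → Matrix n n ℂ)
    (K : ι → Matrix n n ℂ)
    (hKraus : ∀ X : Matrix n n ℂ, N X = ∑ u, K u * X * (K u)ᴴ)
    (hTP : ∑ u, (K u)ᴴ * K u = 1)
    (hdual : ∀ X : Matrix n n ℂ, Ndual X = ∑ u, (K u)ᴴ * X * K u)
    (hKMS : ∀ A B : Matrix n n ℂ,
      wInner ρ hρ.1 (1/2) A (Ndual B) = wInner ρ hρ.1 (1/2) (Ndual A) B)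
    (hfix : N ρ = ρ)
    (hunique : ∀ σ : Matrix n n ℂ, σ.PosSemidef → σ.trace = 1 → N σ = σ → σ = ρ)
    (hspec : ∀ (μ : ℂ) (X : Matrix n n ℂ), X ≠ 0 → N X = μ • X →
      μ.im = 0 ∧ 0 ≤ μ.re ∧ μ.re ≤ 1)
    (Δ : ℝ) (hΔ0 : 0 < Δ) (hΔ1 : Δ ≤ 1)
    (hgap : ∃ Z : Matrix n n ℂ, Z ≠ 0 ∧ Ndual Z = (((1 : ℝ) - Δ : ℝ) : ℂ) • Z) :
    ∀ ε : ℝ, 0 < ε → ε < 1 → ∀ t : ℕ,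
      (∀ σ : Matrix n n ℂ, σ.PosSemidef → σ.trace = 1 →
        traceNorm (N^[t] σ - ρ) ≤ ε) →
      (1 / Δ - 1) * Real.log (1 / ε) ≤ (t : ℝ) :=
  mixing_time_lower_bound_general ρ hρ N Ndual K hKraus hdual hfix Δ hΔ0 hΔ1 hgap
end

section
/- Let {O_j}_{j} be a finite family of commuting Hermitian matrices with Σ_j O_j² = I, let ρ be a density matrix, and let w_j ∈ ℝ be real values. Define E = Σ_j w_j tr(O_j² ρ), V = Σ_j (w_j − E)² tr(O_j² ρ), and C = Σ_{j,k} (w_j − E)(w_k − E) tr(O_k O_j ρ O_j O_k). Then 0 ≤ C ≤ V. -/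
/-!
Write `P j = O j * O j`, `c j = w j - E` and `t j k = Re tr (P j * P k * ρ)`. By cyclicity of the
trace and commutativity, the `(j, k)` term of `C` is `c j * c k * t j k`, and
`t j k = Re tr (B ρ Bᴴ) ≥ 0` for `B = O k * O j`. The matrix `t` is symmetric, and since
`∑ k, P k = 1` its rows sum to `Re tr (P j * ρ)`, so `V = ∑ j, c j ^ 2 * ∑ k, t j k`.
Hence `C = Re tr (A * A * ρ) ≥ 0` for the Hermitian `A = ∑ j, c j • P j`, and
`2 (V - C) = ∑ j, ∑ k, (c j - c k) ^ 2 * t j k ≥ 0`.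
-/

open Matrix
open scoped ComplexOrder

theorem Finset.sum_sum_mul_mul_le_sum_sq_mul_sum {ι : Type*} [Fintype ι] (t : ι → ι → ℝ)
    (h_symm : ∀ j k, t j k = t k j) (h_nonneg : ∀ j k, 0 ≤ t j k) (c : ι → ℝ) :
    ∑ j, ∑ k, c j * c k * t j k ≤ ∑ j, c j ^ 2 * ∑ k, t j k := by
  have h_swap : ∑ j, ∑ k, c k ^ 2 * t j k = ∑ j, ∑ k, c j ^ 2 * t j k := by
    rw [Finset.sum_comm]; simp only [h_symm]
  have h_gap : 0 ≤ ∑ j, ∑ k, (c j - c k) ^ 2 * t j k :=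
    Finset.sum_nonneg fun j _ ↦ Finset.sum_nonneg fun k _ ↦
      mul_nonneg (sq_nonneg _) (h_nonneg j k)
  have h_expand : ∑ j, ∑ k, (c j - c k) ^ 2 * t j k
      = ∑ j, ∑ k, c j ^ 2 * t j k + ∑ j, ∑ k, c k ^ 2 * t j k
        - 2 * ∑ j, ∑ k, c j * c k * t j k := by
    simp only [Finset.mul_sum, ← Finset.sum_add_distrib, ← Finset.sum_sub_distrib]
    refine Finset.sum_congr rfl fun j _ ↦ Finset.sum_congr rfl fun k _ ↦ ?_
    ring
  have h_rhs : ∑ j, c j ^ 2 * ∑ k, t j k = ∑ j, ∑ k, c j ^ 2 * t j k := by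
    simp only [Finset.mul_sum]
  linarith

namespace Matrix

variable {n : Type*} [Fintype n]

theorem trace_mul_mul_mul_mul_eq_of_commute {R : Type*} [CommSemiring R]
    {a b : Matrix n n R} (h : Commute a b) (ρ : Matrix n n R) :
    (b * a * ρ * a * b).trace = (a * a * (b * b) * ρ).trace := by
  rw [trace_mul_comm, ← mul_assoc, ← mul_assoc, ← mul_assoc, trace_mul_comm, ← mul_assoc]
  rw [(h.symm.mul_left h.symm).eq, ← mul_assoc]

theorem trace_sum_smul_mul_sum_smul_mul {R ι : Type*} [CommSemiring R] [Fintype ι]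
    (c : ι → R) (P : ι → Matrix n n R) (ρ : Matrix n n R) :
    ((∑ j, c j • P j) * (∑ k, c k • P k) * ρ).trace
      = ∑ j, ∑ k, c j * c k * (P j * P k * ρ).trace := by
  simp only [Finset.sum_mul, Finset.mul_sum, trace_sum, smul_mul_assoc, mul_smul_comm, trace_smul,
    smul_eq_mul]
  rw [Finset.sum_comm]
  refine Finset.sum_congr rfl fun j _ ↦ Finset.sum_congr rfl fun k _ ↦ ?_
  ring

variable {𝕜 : Type*} [RCLike 𝕜]

theorem PosSemidef.re_trace_mul_mul_conjTranspose_nonneg {ρ : Matrix n n 𝕜}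
    (hρ : ρ.PosSemidef) (B : Matrix n n 𝕜) : 0 ≤ RCLike.re (B * ρ * Bᴴ).trace :=
  (RCLike.nonneg_iff.mp (hρ.mul_mul_conjTranspose_same B).trace_nonneg).1

theorem IsHermitian.re_trace_mul_self_mul_nonneg {A ρ : Matrix n n 𝕜} (hA : A.IsHermitian)
    (hρ : ρ.PosSemidef) : 0 ≤ RCLike.re (A * A * ρ).trace := by
  have h := hρ.re_trace_mul_mul_conjTranspose_nonneg A
  rwa [hA.eq, trace_mul_comm, ← mul_assoc] at h

theorem sum_sum_mul_mul_re_trace_nonneg {ι : Type*} [Fintype ι] {P : ι → Matrix n n 𝕜}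
    (hP : ∀ j, (P j).IsHermitian) {ρ : Matrix n n 𝕜} (hρ : ρ.PosSemidef) (c : ι → ℝ) :
    0 ≤ ∑ j, ∑ k, c j * c k * RCLike.re (P j * P k * ρ).trace := by
  have hA : (∑ j, (c j : 𝕜) • P j).IsHermitian :=
    isSelfAdjoint_sum _ fun j _ ↦ (hP j).smul (RCLike.conj_ofReal (c j))
  have h := hA.re_trace_mul_self_mul_nonneg hρ
  simpa only [trace_sum_smul_mul_sum_smul_mul, map_sum, ← RCLike.ofReal_mul,
    RCLike.re_ofReal_mul] using h

end Matrix

theorem covariance_le_variance_general {n ι : Type*} [Fintype n] [DecidableEq n] [Fintype ι]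
    (O : ι → Matrix n n ℂ)
    (hherm : ∀ j, (O j).IsHermitian)
    (hcomm : ∀ j k, O j * O k = O k * O j)
    (hsum : ∑ j, O j * O j = 1)
    (ρ : Matrix n n ℂ) (hρ : ρ.PosSemidef)
    (w : ι → ℝ) (Ex V C : ℝ)
    (hV : V = ∑ j, (w j - Ex) ^ 2 * ((O j * O j * ρ).trace).re)
    (hC : C = ∑ j, ∑ k,
      (w j - Ex) * (w k - Ex) * ((O k * O j * ρ * O j * O k).trace).re) :
    0 ≤ C ∧ C ≤ V := by
  have h_comm : ∀ j k, Commute (O j) (O k) := hcomm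
  set t : ι → ι → ℝ := fun j k ↦ (O j * O j * (O k * O k) * ρ).trace.re
  have h_t : ∀ j k, (O k * O j * ρ * O j * O k).trace.re = t j k := fun j k ↦ by
    rw [trace_mul_mul_mul_mul_eq_of_commute (h_comm j k) ρ]
  have h_row : ∀ j, ∑ k, t j k = (O j * O j * ρ).trace.re := fun j ↦ by
    simp only [t, ← Complex.re_sum, ← trace_sum, ← Finset.sum_mul, ← Finset.mul_sum, hsum,
      mul_one]
  have h_nonneg : ∀ j k, 0 ≤ t j k := fun j k ↦ by
    have := hρ.re_trace_mul_mul_conjTranspose_nonneg (O k * O j)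
    rw [conjTranspose_mul, (hherm j).eq, (hherm k).eq, ← mul_assoc] at this
    exact h_t j k ▸ this
  have h_symm : ∀ j k, t j k = t k j := fun j k ↦ by
    have h_sq_comm := (h_comm j k).mul_left (h_comm j k)
    simp only [t, (h_sq_comm.mul_right h_sq_comm).eq]
  have h_sq : ∀ j, (O j * O j).IsHermitian := fun j ↦ by
    simpa only [(hherm j).eq] using isHermitian_mul_conjTranspose_self (O j)
  simp only [h_t] at hC
  subst hC hV
  refine ⟨sum_sum_mul_mul_re_trace_nonneg h_sq hρ _, ?_⟩
  simp only [← h_row]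
  exact Finset.sum_sum_mul_mul_le_sum_sq_mul_sum t h_symm h_nonneg _

/-- For a finite family of commuting Hermitian matrices `O_j` with `∑_j O_j² = I`, a density
matrix `ρ` and real values `w_j`: with `E = ∑_j w_j tr(O_j² ρ)`,
`V = ∑_j (w_j − E)² tr(O_j² ρ)` and
`C = ∑_{j,k} (w_j − E)(w_k − E) tr(O_k O_j ρ O_j O_k)`, we have `0 ≤ C ≤ V`. -/
theorem covariance_le_variance {n ι : Type*} [Fintype n] [DecidableEq n] [Fintype ι]
    (O : ι → Matrix n n ℂ)
    (hherm : ∀ j, (O j).IsHermitian)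
    (hcomm : ∀ j k, O j * O k = O k * O j)
    (hsum : ∑ j, O j * O j = 1)
    (ρ : Matrix n n ℂ) (hρ : ρ.PosSemidef) (htr : ρ.trace = 1)
    (w : ι → ℝ) (Ex V C : ℝ)
    (hE : Ex = ∑ j, w j * ((O j * O j * ρ).trace).re)
    (hV : V = ∑ j, (w j - Ex) ^ 2 * ((O j * O j * ρ).trace).re)
    (hC : C = ∑ j, ∑ k,
      (w j - Ex) * (w k - Ex) * ((O k * O j * ρ * O j * O k).trace).re) :
    0 ≤ C ∧ C ≤ V :=
  covariance_le_variance_general O hherm hcomm hsum ρ hρ w Ex V C hV hC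
end
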